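/- (Lichnerowicz) Let (X,Q,π) be a finite Markov chain, θ a mean, and K ∈ ℝ, and suppose X satisfies CD_θ(K,∞), i.e. ⟨ρ, Γ_{2,ρ} f − K Γ_ρ f⟩_π ≥ 0 for all ρ : X → I_θ and all f : X → ℝ. Then every positive eigenvalue λ of −Δ (i.e. λ > 0 with −Δf = λf for some f ≠ 0) satisfies λ ≥ K; in particular the smallest positive eigenvalue λ₁(X) of −Δ satisfies λ₁(X) ≥ K. -/

import Mathlib

open Finset

/-- Partial derivative of a mean in its first variable. -/
noncomputable def d1 (θ : ℝ → ℝ → ℝ) (r s : ℝ) : ℝ := deriv (fun u => θ u s) r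

/-- A mean: nonnegative, continuous on `[0,∞)²`, smooth on `(0,∞)²`, symmetric,
monotone, homogeneous, normalized. -/
def IsMean (θ : ℝ → ℝ → ℝ) : Prop :=
  (∀ r s, 0 ≤ r → 0 ≤ s → 0 ≤ θ r s) ∧
  ContinuousOn (fun p : ℝ × ℝ => θ p.1 p.2) (Set.Ici 0 ×ˢ Set.Ici 0) ∧
  ContDiffOn ℝ (⊤ : ℕ∞) (fun p : ℝ × ℝ => θ p.1 p.2) (Set.Ioi 0 ×ˢ Set.Ioi 0) ∧
  (∀ r s, θ r s = θ s r) ∧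
  (∀ r s t : ℝ, 0 ≤ s → 0 ≤ t → t ≤ r → θ t s ≤ θ r s) ∧
  (∀ l r s : ℝ, 0 < l → 0 ≤ r → 0 ≤ s → θ (l * r) (l * s) = l * θ r s) ∧
  θ 1 1 = 1

/-- The domain `I_θ`: `(0,∞)` if `θ(0,s) = 0` for `s > 0`, and `[0,∞)` if
`θ(0,s) > 0` for `s > 0` (in which case `θ` is additionally `C¹` on `[0,∞)²`). -/
def MeanDom (θ : ℝ → ℝ → ℝ) (I : Set ℝ) : Prop :=
  ((∀ s > 0, θ 0 s = 0) ∧ I = Set.Ioi 0) ∨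
  ((∀ s > 0, 0 < θ 0 s) ∧ I = Set.Ici 0 ∧
    ContDiffOn ℝ 1 (fun p : ℝ × ℝ => θ p.1 p.2) (Set.Ici 0 ×ˢ Set.Ici 0))

/-- The Markov chain Laplacian `Δf(x) = ∑_y Q(x,y)(f(y) - f(x))`. -/
def lap {X : Type*} [Fintype X] (Q : X → X → ℝ) (f : X → ℝ) : X → ℝ :=
  fun x => ∑ y, Q x y * (f y - f x)

/-- `Γ_ρ(f,g)(x) = ∑_y ∂₁θ(ρ(x),ρ(y)) (f(y)-f(x))(g(y)-g(x)) Q(x,y)`. -/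
noncomputable def gamRhoBil {X : Type*} [Fintype X] (Q : X → X → ℝ) (θ : ℝ → ℝ → ℝ)
    (ρ f g : X → ℝ) : X → ℝ :=
  fun x => ∑ y, d1 θ (ρ x) (ρ y) * (f y - f x) * (g y - g x) * Q x y

/-- `Γ_ρ f := Γ_ρ(f,f)`. -/
noncomputable def gamRho {X : Type*} [Fintype X] (Q : X → X → ℝ) (θ : ℝ → ℝ → ℝ)
    (ρ f : X → ℝ) : X → ℝ :=
  gamRhoBil Q θ ρ f f

/-- `Γ_{2,ρ} f := ½ Δ(Γ_ρ f) - Γ_ρ(f, Δf)`. -/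
noncomputable def gamRho2 {X : Type*} [Fintype X] (Q : X → X → ℝ) (θ : ℝ → ℝ → ℝ)
    (ρ f : X → ℝ) : X → ℝ :=
  fun x => (1/2) * lap Q (gamRho Q θ ρ f) x - gamRhoBil Q θ ρ f (lap Q f) x


lemma d1_half (θ : ℝ → ℝ → ℝ) (hθ : IsMean θ) : d1 θ 1 1 = 1/2 := by
  obtain ⟨hnn, hcont, hsmooth, hsym, hmono, hhom, hnorm⟩ := hθ
  have hopen : IsOpen (Set.Ioi (0:ℝ) ×ˢ Set.Ioi (0:ℝ)) := isOpen_Ioi.prod isOpen_Ioi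
  have hmem : ((1:ℝ), (1:ℝ)) ∈ Set.Ioi (0:ℝ) ×ˢ Set.Ioi (0:ℝ) := by
    constructor <;> exact Set.mem_Ioi.2 one_pos
  have hF : DifferentiableAt ℝ (fun p : ℝ × ℝ => θ p.1 p.2) (1,1) :=
    (hsmooth.contDiffAt (hopen.mem_nhds hmem)).differentiableAt (by simp)
  have hg : DifferentiableAt ℝ (fun t : ℝ => θ t 1) 1 := by
    have h2 : DifferentiableAt ℝ (fun t : ℝ => ((t, (1:ℝ)) : ℝ × ℝ)) 1 :=
      DifferentiableAt.prodMk differentiableAt_fun_id (differentiableAt_const 1)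
    have h3 := DifferentiableAt.comp (𝕜 := ℝ) (f := fun t : ℝ => ((t, (1:ℝ)) : ℝ × ℝ)) (g := fun p : ℝ × ℝ => θ p.1 p.2) (1:ℝ) hF h2
    exact h3
  set c := deriv (fun t : ℝ => θ t 1) 1 with hcdef
  have hgd : HasDerivAt (fun t : ℝ => θ t 1) c 1 := hg.hasDerivAt
  have hinv : HasDerivAt (fun t : ℝ => t⁻¹) (-1) 1 := by
    simpa using hasDerivAt_inv (one_ne_zero : (1:ℝ) ≠ 0)
  have hgd' : HasDerivAt (fun t : ℝ => θ t 1) c ((1:ℝ)⁻¹) := by rw [inv_one]; exact hgd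
  have hcomp : HasDerivAt (fun t : ℝ => θ t⁻¹ 1) (c * (-1)) 1 := hgd'.comp 1 hinv
  have hprod : HasDerivAt (fun t : ℝ => t * θ t⁻¹ 1)
      (1 * θ (1:ℝ)⁻¹ 1 + 1 * (c * (-1))) 1 := (hasDerivAt_id 1).mul hcomp
  have heq : (fun t : ℝ => θ t 1) =ᶠ[nhds 1] (fun t : ℝ => t * θ t⁻¹ 1) := by
    filter_upwards [isOpen_Ioi.mem_nhds (Set.mem_Ioi.2 (one_pos : (0:ℝ) < 1))] with t ht
    have ht0 : (0:ℝ) < t := ht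
    have h := hhom t 1 t⁻¹ ht0 zero_le_one (by positivity)
    rw [mul_one, mul_inv_cancel₀ ht0.ne'] at h
    rw [h, hsym 1 t⁻¹]
  have hgd2 : HasDerivAt (fun t : ℝ => θ t 1) (1 * θ (1:ℝ)⁻¹ 1 + 1 * (c * (-1))) 1 :=
    hprod.congr_of_eventuallyEq heq
  have huniq := hgd.unique hgd2
  have h11 : θ (1:ℝ)⁻¹ 1 = 1 := by rw [inv_one]; exact hnorm
  rw [h11] at huniq
  show deriv (fun u => θ u 1) 1 = 1/2
  rw [← hcdef]; linarith


section AuxSums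

variable {X : Type*} [Fintype X]

lemma aux_sum_lap_pr (Q : X → X → ℝ) (pr : X → ℝ) (hQrow : ∀ x, ∑ y, Q x y = 1)
    (hrev : ∀ x y, pr x * Q x y = pr y * Q y x) (g : X → ℝ) :
    ∑ x, (∑ y, Q x y * (g y - g x)) * pr x = 0 := by
  have h1 : ∑ x, (∑ y, Q x y * (g y - g x)) * pr x
      = (∑ x, ∑ y, pr x * Q x y * g y) - ∑ x, ∑ y, pr x * Q x y * g x := by
    rw [← Finset.sum_sub_distrib]
    apply Finset.sum_congr rfl; intro x _
    rw [Finset.sum_mul, ← Finset.sum_sub_distrib]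
    apply Finset.sum_congr rfl; intro y _; ring
  have h2 : ∑ x, ∑ y, pr x * Q x y * g y = ∑ y, pr y * g y := by
    rw [Finset.sum_comm]
    apply Finset.sum_congr rfl; intro y _
    have e : ∀ x, pr x * Q x y * g y = pr y * g y * Q y x := fun x => by
      rw [hrev]; ring
    simp_rw [e]
    rw [← Finset.mul_sum, hQrow, mul_one]
  have h3 : ∑ x, ∑ y, pr x * Q x y * g x = ∑ x, pr x * g x := by
    apply Finset.sum_congr rfl; intro x _
    have e : ∀ y, pr x * Q x y * g x = pr x * g x * Q x y := fun y => by ring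
    simp_rw [e]
    rw [← Finset.mul_sum, hQrow, mul_one]
  rw [h1, h2, h3, sub_self]

lemma aux_dirichlet (Q : X → X → ℝ) (pr : X → ℝ) (hQrow : ∀ x, ∑ y, Q x y = 1)
    (hrev : ∀ x y, pr x * Q x y = pr y * Q y x) (f : X → ℝ) :
    ∑ x, f x * (∑ y, Q x y * (f y - f x)) * pr x
      = -(1/2) * ∑ x, ∑ y, (f y - f x)^2 * Q x y * pr x := by
  have hB : ∑ x, ∑ y, pr x * Q x y * (f y * f y) = ∑ x, ∑ y, pr x * Q x y * (f x * f x) := by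
    rw [Finset.sum_comm]
    apply Finset.sum_congr rfl; intro y _
    apply Finset.sum_congr rfl; intro x _
    rw [hrev]
  have lhs : ∑ x, f x * (∑ y, Q x y * (f y - f x)) * pr x
      = (∑ x, ∑ y, pr x * Q x y * (f x * f y)) - ∑ x, ∑ y, pr x * Q x y * (f x * f x) := by
    rw [← Finset.sum_sub_distrib]
    apply Finset.sum_congr rfl; intro x _
    rw [Finset.mul_sum, Finset.sum_mul, ← Finset.sum_sub_distrib]
    apply Finset.sum_congr rfl; intro y _; ring
  have rhs1 : ∀ x, ∑ y, (f y - f x)^2 * Q x y * pr x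
      = ((∑ y, pr x * Q x y * (f y * f y)) + ∑ y, pr x * Q x y * (f x * f x))
        - 2 * ∑ y, pr x * Q x y * (f x * f y) := by
    intro x
    rw [Finset.mul_sum, ← Finset.sum_add_distrib, ← Finset.sum_sub_distrib]
    apply Finset.sum_congr rfl; intro y _; ring
  have rhs : ∑ x, ∑ y, (f y - f x)^2 * Q x y * pr x
      = ((∑ x, ∑ y, pr x * Q x y * (f y * f y)) + ∑ x, ∑ y, pr x * Q x y * (f x * f x))
        - 2 * ∑ x, ∑ y, pr x * Q x y * (f x * f y) := by
    simp_rw [rhs1]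
    rw [Finset.mul_sum, ← Finset.sum_add_distrib, ← Finset.sum_sub_distrib]
  rw [lhs, rhs, hB]; ring

end AuxSums


/-- Lichnerowicz: if `X` satisfies `CD_θ(K,∞)`, i.e.
`⟨ρ, Γ_{2,ρ}f - KΓ_ρ f⟩_π ≥ 0` for all `ρ : X → I_θ` and all `f`, then every
positive eigenvalue of `-Δ` is at least `K`; in particular `λ₁(X) ≥ K`. -/
theorem lichnerowicz
    {X : Type*} [Fintype X] [DecidableEq X]
    (Q : X → X → ℝ) (pr : X → ℝ)
    (hQ : ∀ x y, 0 ≤ Q x y) (hQrow : ∀ x, ∑ y, Q x y = 1)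
    (hpr : ∀ x, 0 < pr x) (hprsum : ∑ x, pr x = 1)
    (hrev : ∀ x y, pr x * Q x y = pr y * Q y x)
    (θ : ℝ → ℝ → ℝ) (hθ : IsMean θ) (Iθ : Set ℝ) (hI : MeanDom θ Iθ)
    (K : ℝ)
    (hCD : ∀ ρ : X → ℝ, (∀ x, ρ x ∈ Iθ) → ∀ f : X → ℝ,
      0 ≤ ∑ x, ρ x * (gamRho2 Q θ ρ f x - K * gamRho Q θ ρ f x) * pr x) :
    ∀ lam : ℝ, 0 < lam →
      (∃ f : X → ℝ, f ≠ 0 ∧ ∀ x, lap Q f x = -(lam * f x)) → K ≤ lam := by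
  intro lam hlam hex
  obtain ⟨f, hfne, heig⟩ := hex
  obtain ⟨x0, hx0⟩ : ∃ x, f x ≠ 0 := by
    by_contra h
    push_neg at h
    exact hfne (funext h)
  have h1I : (1:ℝ) ∈ Iθ := by
    rcases hI with ⟨_, rfl⟩ | ⟨_, rfl, _⟩
    · exact Set.mem_Ioi.2 one_pos
    · exact Set.mem_Ici.2 zero_le_one
  have hc : d1 θ 1 1 = 1/2 := d1_half θ hθ
  set ρ : X → ℝ := fun _ => 1 with hρ
  have hCD1 := hCD ρ (fun _ => h1I) f
  have hg : ∀ x, gamRho Q θ ρ f x = (1/2) * ∑ y, (f y - f x)^2 * Q x y := by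
    intro x
    show (∑ y, d1 θ (ρ x) (ρ y) * (f y - f x) * (f y - f x) * Q x y) = _
    rw [Finset.mul_sum]
    apply Finset.sum_congr rfl; intro y _
    show d1 θ 1 1 * (f y - f x) * (f y - f x) * Q x y = _
    rw [hc]; ring
  have hbil : ∀ x, gamRhoBil Q θ ρ f (lap Q f) x = -lam * gamRho Q θ ρ f x := by
    intro x
    show (∑ y, d1 θ (ρ x) (ρ y) * (f y - f x) * (lap Q f y - lap Q f x) * Q x y)
      = -lam * ∑ y, d1 θ (ρ x) (ρ y) * (f y - f x) * (f y - f x) * Q x y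
    rw [Finset.mul_sum]
    apply Finset.sum_congr rfl; intro y _
    rw [heig y, heig x]; ring
  have hsum : ∑ x, ρ x * (gamRho2 Q θ ρ f x - K * gamRho Q θ ρ f x) * pr x
      = (1/2) * (∑ x, (∑ y, Q x y * (gamRho Q θ ρ f y - gamRho Q θ ρ f x)) * pr x)
        + (lam - K) * ∑ x, gamRho Q θ ρ f x * pr x := by
    rw [Finset.mul_sum, Finset.mul_sum, ← Finset.sum_add_distrib]
    apply Finset.sum_congr rfl; intro x _
    show (1:ℝ) * (gamRho2 Q θ ρ f x - K * gamRho Q θ ρ f x) * pr x = _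
    unfold gamRho2
    rw [hbil x]
    show (1:ℝ) * ((1/2 * (∑ y, Q x y * (gamRho Q θ ρ f y - gamRho Q θ ρ f x))
        - -lam * gamRho Q θ ρ f x) - K * gamRho Q θ ρ f x) * pr x = _
    ring
  rw [hsum, aux_sum_lap_pr Q pr hQrow hrev, mul_zero, zero_add] at hCD1
  have hS : ∑ x, gamRho Q θ ρ f x * pr x
      = (1/2) * ∑ x, ∑ y, (f y - f x)^2 * Q x y * pr x := by
    rw [Finset.mul_sum]
    apply Finset.sum_congr rfl; intro x _
    rw [hg x, Finset.mul_sum, Finset.mul_sum, Finset.sum_mul]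
    apply Finset.sum_congr rfl; intro y _; ring
  have hdir := aux_dirichlet Q pr hQrow hrev f
  have hlhs : ∑ x, f x * (∑ y, Q x y * (f y - f x)) * pr x
      = -lam * ∑ x, f x ^ 2 * pr x := by
    rw [Finset.mul_sum]
    apply Finset.sum_congr rfl; intro x _
    have : (∑ y, Q x y * (f y - f x)) = lap Q f x := rfl
    rw [this, heig x]; ring
  have hE : ∑ x, ∑ y, (f y - f x)^2 * Q x y * pr x = 2 * lam * ∑ x, f x ^ 2 * pr x := by
    rw [hlhs] at hdir
    linarith
  have hpos : 0 < ∑ x, f x ^ 2 * pr x := by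
    apply Finset.sum_pos'
    · intro x _
      exact mul_nonneg (sq_nonneg _) (hpr x).le
    · refine ⟨x0, Finset.mem_univ _, mul_pos ?_ (hpr x0)⟩
      have := mul_self_pos.mpr hx0
      rwa [← pow_two] at this
  rw [hS, hE] at hCD1
  nlinarith [mul_pos hlam hpos]
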